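/- arXiv:2403.15344 — 3 statements merged into one kernel-verified Lean document; each statement's English description precedes it below -/
import Mathlib

section
/- Let T ≥ 2 be an integer, i₀ > 0 a real number, and i : ℝ → ℝ a function that is nonnegative, monotonically nondecreasing, convex, and differentiable on [0,∞). If x* ∈ ℝ^{T-1} is a minimizer of the cost C over the set of feasible vectors, then x*_k = 0 for every k with 2 ≤ k ≤ T−1; that is, the optimal exploration is either a lazy excitation or an immediate excitation. -/
/-- Partial information `D_t(x) = i₀ + ∑_{s=1}^{t} i(x_s)`. -/
noncomputable def Dinfo (i0 : ℝ) (i : ℝ → ℝ) (x : ℕ → ℝ) (t : ℕ) : ℝ :=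
  i0 + ∑ s ∈ Finset.Icc 1 t, i (x s)

/-- Cost `C(x) = ∑_{t=1}^{T-1} 1/D_t(x) + ∑_{t=1}^{T-1} x_t`. -/
noncomputable def cost (T : ℕ) (i0 : ℝ) (i : ℝ → ℝ) (x : ℕ → ℝ) : ℝ :=
  (∑ t ∈ Finset.Icc 1 (T - 1), 1 / Dinfo i0 i x t) + ∑ t ∈ Finset.Icc 1 (T - 1), x t

/-- Feasibility: `x_k ≥ 0` for `k = 1, …, T-1`. -/
def Feasible (T : ℕ) (x : ℕ → ℝ) : Prop :=
  ∀ k, 1 ≤ k → k ≤ T - 1 → 0 ≤ x k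

/-!
If `x k > 0` for some `k ≥ 2`, a cheaper feasible vector exists. When `i (x k) = i 0`, resetting
`x k` to `0` leaves every `D_t` unchanged and saves `x k`. Otherwise, move the excitation `x k`
onto `x 1`: the linear part of the cost is unchanged, and convexity gives the superadditivity
`i (x 1 + x k) - i (x 1) ≥ i (x k) - i 0 > 0`, so no `D_t` decreases and `D_1` strictly increases.
-/

open Finset Function

theorem ConvexOn.map_add_map_le_map_add_add_map_zero {f : ℝ → ℝ}
    (hf : ConvexOn ℝ (Set.Ici 0) f) {a b : ℝ} (ha : 0 ≤ a) (hb : 0 ≤ b) :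
    f a + f b ≤ f (a + b) + f 0 := by
  rcases (add_nonneg ha hb).eq_or_lt with hab | hab
  · obtain ⟨rfl, rfl⟩ : a = 0 ∧ b = 0 := ⟨by linarith, by linarith⟩
    simp
  have interpolate : ∀ c, 0 ≤ c → c ≤ a + b →
      f c ≤ (a + b - c) / (a + b) * f 0 + c / (a + b) * f (a + b) := by
    intro c hc0 hc
    have h := hf.2 Set.self_mem_Ici hab.le (div_nonneg (sub_nonneg.2 hc) hab.le)
      (div_nonneg hc0 hab.le) (by field)
    have hc : (a + b - c) / (a + b) * 0 + c / (a + b) * (a + b) = c := by field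
    simpa only [smul_eq_mul, hc] using h
  have hsum : (a + b - a) / (a + b) + (a + b - b) / (a + b) = 1 := by field
  linear_combination interpolate a ha (by linarith) + interpolate b hb (by linarith)
    + (f 0 + f (a + b)) * hsum

theorem Finset.sum_update_eq_add_ite {ι M : Type*} [DecidableEq ι] [AddCommGroup M]
    (s : Finset ι) (f : ι → M) (j : ι) (v : M) :
    ∑ x ∈ s, update f j v x = ∑ x ∈ s, f x + if j ∈ s then v - f j else 0 := by
  split_ifs with hj
  · rw [sum_update_of_mem hj, sum_eq_add_sum_sdiff_singleton_of_mem hj]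
    abel
  · rw [sum_update_of_notMem hj, add_zero]

theorem Feasible.update {T : ℕ} {x : ℕ → ℝ} (hx : Feasible T x) (j : ℕ) {v : ℝ} (hv : 0 ≤ v) :
    Feasible T (update x j v) := by
  intro k hk1 hkT
  rcases eq_or_ne k j with rfl | hkj
  · simpa using hv
  · simpa [hkj] using hx k hk1 hkT

section Cost

variable {i0 : ℝ} {i : ℝ → ℝ}

theorem Dinfo_pos {T : ℕ} {x : ℕ → ℝ} (hi0 : 0 < i0) (hnonneg : ∀ y, 0 ≤ y → 0 ≤ i y)
    (hx : Feasible T x) {t : ℕ} (ht : t ≤ T - 1) : 0 < Dinfo i0 i x t := by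
  have : 0 ≤ ∑ s ∈ Icc 1 t, i (x s) := sum_nonneg fun s hs => by
    rw [mem_Icc] at hs
    exact hnonneg _ (hx s hs.1 (hs.2.trans ht))
  unfold Dinfo
  linarith

theorem Dinfo_update (x : ℕ → ℝ) (j : ℕ) (v : ℝ) (t : ℕ) :
    Dinfo i0 i (update x j v) t = Dinfo i0 i x t + if j ∈ Icc 1 t then i v - i (x j) else 0 := by
  have h : ∀ s, i (update x j v s) = update (i ∘ x) j (i v) s := fun s => by
    rw [← comp_update]; rfl
  simp only [Dinfo, h, sum_update_eq_add_ite, comp_apply]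
  ring

theorem cost_update_of_map_eq {T : ℕ} {x : ℕ → ℝ} {k : ℕ} (hk : k ∈ Icc 1 (T - 1)) {v : ℝ}
    (hv : i v = i (x k)) : cost T i0 i (update x k v) = cost T i0 i x + (v - x k) := by
  simp only [cost, Dinfo_update, hv, sub_self, ite_self, add_zero, sum_update_eq_add_ite,
    if_pos hk]
  ring

def moveToFirst (x : ℕ → ℝ) (k : ℕ) : ℕ → ℝ :=
  update (update x k 0) 1 (x 1 + x k)

theorem Feasible.moveToFirst {T : ℕ} {x : ℕ → ℝ} (hx : Feasible T x) {k : ℕ} (hk1 : 1 ≤ k)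
    (hkT : k ≤ T - 1) : Feasible T (moveToFirst x k) :=
  (hx.update k le_rfl).update 1 (add_nonneg (hx 1 le_rfl (hk1.trans hkT)) (hx k hk1 hkT))

theorem sum_moveToFirst (x : ℕ → ℝ) {k n : ℕ} (hk2 : 2 ≤ k) (hkn : k ≤ n) :
    ∑ t ∈ Icc 1 n, moveToFirst x k t = ∑ t ∈ Icc 1 n, x t := by
  have hk1 : k ≠ 1 := by omega
  rw [moveToFirst, sum_update_eq_add_ite, sum_update_eq_add_ite, update_of_ne hk1.symm,
    if_pos (mem_Icc.2 ⟨le_rfl, by omega⟩), if_pos (mem_Icc.2 ⟨by omega, hkn⟩)]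
  ring

theorem Dinfo_moveToFirst (x : ℕ → ℝ) {k : ℕ} (hk : k ≠ 1) {t : ℕ} (ht : 1 ≤ t) :
    Dinfo i0 i (moveToFirst x k) t =
      Dinfo i0 i x t + (i (x 1 + x k) - i (x 1)) + if k ∈ Icc 1 t then i 0 - i (x k) else 0 := by
  rw [moveToFirst, Dinfo_update, Dinfo_update, if_pos (mem_Icc.2 ⟨le_rfl, ht⟩),
    update_of_ne hk.symm]
  ring

theorem Dinfo_le_Dinfo_moveToFirst (hmono : ∀ a b, 0 ≤ a → a ≤ b → i a ≤ i b)
    (hconv : ConvexOn ℝ (Set.Ici 0) i) {x : ℕ → ℝ} {k : ℕ} (hx1 : 0 ≤ x 1) (hxk : 0 ≤ x k)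
    (hk : k ≠ 1) {t : ℕ} (ht : 1 ≤ t) : Dinfo i0 i x t ≤ Dinfo i0 i (moveToFirst x k) t := by
  have hsuper := hconv.map_add_map_le_map_add_add_map_zero hx1 hxk
  have hincr := hmono _ _ hx1 (le_add_of_nonneg_right hxk)
  rw [Dinfo_moveToFirst x hk ht]
  split_ifs <;> linarith

theorem cost_moveToFirst_lt (hi0 : 0 < i0) (hnonneg : ∀ y, 0 ≤ y → 0 ≤ i y)
    (hmono : ∀ a b, 0 ≤ a → a ≤ b → i a ≤ i b) (hconv : ConvexOn ℝ (Set.Ici 0) i)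
    {T : ℕ} {x : ℕ → ℝ} (hx : Feasible T x) {k : ℕ} (hk2 : 2 ≤ k) (hkT : k ≤ T - 1)
    (hxk : i 0 < i (x k)) : cost T i0 i (moveToFirst x k) < cost T i0 i x := by
  have hk1 : k ≠ 1 := by omega
  have hx1 : 0 ≤ x 1 := hx 1 le_rfl (by omega)
  have hxk_nonneg : 0 ≤ x k := hx k (by omega) hkT
  have hD : ∀ t ∈ Icc 1 (T - 1), 0 < Dinfo i0 i x t := fun t ht =>
    Dinfo_pos hi0 hnonneg hx (mem_Icc.1 ht).2
  have hinv : ∑ t ∈ Icc 1 (T - 1), 1 / Dinfo i0 i (moveToFirst x k) t <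
      ∑ t ∈ Icc 1 (T - 1), 1 / Dinfo i0 i x t := by
    refine sum_lt_sum (fun t ht => ?_) ⟨1, mem_Icc.2 ⟨le_rfl, by omega⟩, ?_⟩
    · exact one_div_le_one_div_of_le (hD t ht)
        (Dinfo_le_Dinfo_moveToFirst hmono hconv hx1 hxk_nonneg hk1 (mem_Icc.1 ht).1)
    · refine one_div_lt_one_div_of_lt (hD 1 (mem_Icc.2 ⟨le_rfl, by omega⟩)) ?_
      rw [Dinfo_moveToFirst x hk1 le_rfl, if_neg (by simp; omega)]
      linarith [hconv.map_add_map_le_map_add_add_map_zero hx1 hxk_nonneg]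
  unfold cost
  rw [sum_moveToFirst x hk2 hkT]
  linarith

end Cost

theorem lazy_or_immediate_general (T : ℕ) (i0 : ℝ) (hi0 : 0 < i0) (i : ℝ → ℝ)
    (hnonneg : ∀ y, 0 ≤ y → 0 ≤ i y)
    (hmono : ∀ a b, 0 ≤ a → a ≤ b → i a ≤ i b)
    (hconv : ConvexOn ℝ (Set.Ici 0) i)
    (xs : ℕ → ℝ) (hfeas : Feasible T xs)
    (hmin : ∀ x, Feasible T x → cost T i0 i xs ≤ cost T i0 i x) :
    ∀ k, 2 ≤ k → k ≤ T - 1 → xs k = 0 := by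
  intro k hk2 hkT
  by_contra hne
  have hxk : 0 < xs k := (hfeas k (by omega) hkT).lt_of_ne' hne
  rcases (hmono 0 (xs k) le_rfl hxk.le).eq_or_lt with hflat | hgain
  · have hdrop := hmin _ (hfeas.update k le_rfl)
    rw [cost_update_of_map_eq (mem_Icc.2 ⟨by omega, hkT⟩) hflat] at hdrop
    linarith
  · exact (cost_moveToFirst_lt hi0 hnonneg hmono hconv hfeas hk2 hkT hgain).not_ge
      (hmin _ (hfeas.moveToFirst (by omega) hkT))

theorem lazy_or_immediate (T : ℕ) (hT : 2 ≤ T) (i0 : ℝ) (hi0 : 0 < i0) (i : ℝ → ℝ)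
    (hnonneg : ∀ y, 0 ≤ y → 0 ≤ i y)
    (hmono : ∀ a b, 0 ≤ a → a ≤ b → i a ≤ i b)
    (hconv : ConvexOn ℝ (Set.Ici 0) i)
    (hdiff : DifferentiableOn ℝ i (Set.Ici 0))
    (xs : ℕ → ℝ) (hfeas : Feasible T xs)
    (hmin : ∀ x, Feasible T x → cost T i0 i xs ≤ cost T i0 i x) :
    ∀ k, 2 ≤ k → k ≤ T - 1 → xs k = 0 :=
  lazy_or_immediate_general T i0 hi0 i hnonneg hmono hconv xs hfeas hmin
end

section
/- Let T ≥ 3 be an integer, i₀ > 0 a real number, and i : ℝ → ℝ a function that is nonnegative and monotonically nondecreasing on [0,∞). Let x ∈ ℝ^{T-1} be feasible, let 1 ≤ j ≤ T−2 with x_j ≥ x_{j+1}, and let x̃ be the vector obtained from x by swapping the entries x_j and x_{j+1}. Then C(x) ≤ C(x̃). -/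
open Finset Equiv

theorem Finset.sum_Icc_comp_swap {M : Type*} [AddCommMonoid M] (f : ℕ → M) {j t : ℕ}
    (hj : 1 ≤ j) (ht : j + 1 ≤ t) :
    ∑ s ∈ Icc 1 t, f (swap j (j + 1) s) = ∑ s ∈ Icc 1 t, f s := by
  refine Perm.sum_comp _ _ _ fun s hs => ?_
  rcases swap_apply_ne_self_iff.mp hs with ⟨-, rfl | rfl⟩ <;> simp only [coe_Icc, Set.mem_Icc] <;>
    omega

section Dinfo

variable {i0 : ℝ} {i : ℝ → ℝ} {x : ℕ → ℝ} {j t : ℕ}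

theorem Dinfo_eq_pred_add (ht : 1 ≤ t) : Dinfo i0 i x t = Dinfo i0 i x (t - 1) + i (x t) := by
  obtain ⟨t, rfl⟩ := Nat.exists_eq_add_of_le' ht
  rw [Dinfo, Dinfo, sum_Icc_succ_top (by omega), Nat.add_sub_cancel, add_assoc]

theorem Dinfo_pos_s3 (hi0 : 0 < i0) (h : ∀ s ∈ Icc 1 t, 0 ≤ i (x s)) : 0 < Dinfo i0 i x t :=
  add_pos_of_pos_of_nonneg hi0 (sum_nonneg h)

theorem Dinfo_comp_swap_of_lt (ht : t < j) :
    Dinfo i0 i (x ∘ swap j (j + 1)) t = Dinfo i0 i x t := by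
  refine congrArg (i0 + ·) (sum_congr rfl fun s hs => ?_)
  rw [mem_Icc] at hs
  rw [Function.comp_apply, swap_apply_of_ne_of_ne (by omega) (by omega)]

theorem Dinfo_comp_swap_of_le (hj : 1 ≤ j) (ht : j + 1 ≤ t) :
    Dinfo i0 i (x ∘ swap j (j + 1)) t = Dinfo i0 i x t :=
  congrArg (i0 + ·) (sum_Icc_comp_swap (fun s => i (x s)) hj ht)

theorem Dinfo_comp_swap_self (hj : 1 ≤ j) :
    Dinfo i0 i (x ∘ swap j (j + 1)) j = Dinfo i0 i x (j - 1) + i (x (j + 1)) := by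
  rw [Dinfo_eq_pred_add hj, Dinfo_comp_swap_of_lt (by omega), Function.comp_apply,
    swap_apply_left]

end Dinfo

theorem cost_le_cost_comp_swap {T : ℕ} {i0 : ℝ} (hi0 : 0 < i0) {i : ℝ → ℝ}
    (hnonneg : ∀ y, 0 ≤ y → 0 ≤ i y) (hmono : ∀ a b, 0 ≤ a → a ≤ b → i a ≤ i b)
    {x : ℕ → ℝ} (hfeas : Feasible T x) {j : ℕ} (hj1 : 1 ≤ j) (hj2 : j + 1 ≤ T - 1)
    (hswap : x (j + 1) ≤ x j) :
    cost T i0 i x ≤ cost T i0 i (x ∘ swap j (j + 1)) := by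
  have hx_succ : 0 ≤ x (j + 1) := hfeas (j + 1) (by omega) hj2
  have hD_pos : 0 < Dinfo i0 i (x ∘ swap j (j + 1)) j := by
    rw [Dinfo_comp_swap_self hj1]
    refine add_pos_of_pos_of_nonneg (Dinfo_pos_s3 hi0 fun s hs => ?_) (hnonneg _ hx_succ)
    rw [mem_Icc] at hs
    exact hnonneg _ (hfeas s hs.1 (by omega))
  have hD_le : Dinfo i0 i (x ∘ swap j (j + 1)) j ≤ Dinfo i0 i x j := by
    rw [Dinfo_comp_swap_self hj1, Dinfo_eq_pred_add hj1]
    exact add_le_add_right (hmono _ _ hx_succ hswap) _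
  refine add_le_add (sum_le_sum fun t _ => ?_) (sum_Icc_comp_swap x hj1 hj2).ge
  rcases lt_trichotomy t j with ht | rfl | ht
  · rw [Dinfo_comp_swap_of_lt ht]
  · exact one_div_le_one_div_of_le hD_pos hD_le
  · rw [Dinfo_comp_swap_of_le hj1 ht]

theorem swap_decreases_cost_general (T : ℕ) (i0 : ℝ) (hi0 : 0 < i0) (i : ℝ → ℝ)
    (hnonneg : ∀ y, 0 ≤ y → 0 ≤ i y)
    (hmono : ∀ a b, 0 ≤ a → a ≤ b → i a ≤ i b)
    (x : ℕ → ℝ) (hfeas : Feasible T x)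
    (j : ℕ) (hj1 : 1 ≤ j) (hj2 : j ≤ T - 2) (hswap : x (j + 1) ≤ x j)
    (xt : ℕ → ℝ)
    (hxt : ∀ k, xt k = if k = j then x (j + 1) else if k = j + 1 then x j else x k) :
    cost T i0 i x ≤ cost T i0 i xt := by
  have hxt_eq : xt = x ∘ swap j (j + 1) := funext fun k => by
    rw [hxt, Function.comp_apply, swap_apply_def]
    split_ifs <;> rfl
  rw [hxt_eq]
  exact cost_le_cost_comp_swap hi0 hnonneg hmono hfeas hj1 (by omega) hswap

theorem swap_decreases_cost (T : ℕ) (hT : 3 ≤ T) (i0 : ℝ) (hi0 : 0 < i0) (i : ℝ → ℝ)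
    (hnonneg : ∀ y, 0 ≤ y → 0 ≤ i y)
    (hmono : ∀ a b, 0 ≤ a → a ≤ b → i a ≤ i b)
    (x : ℕ → ℝ) (hfeas : Feasible T x)
    (j : ℕ) (hj1 : 1 ≤ j) (hj2 : j ≤ T - 2) (hswap : x (j + 1) ≤ x j)
    (xt : ℕ → ℝ)
    (hxt : ∀ k, xt k = if k = j then x (j + 1) else if k = j + 1 then x j else x k) :
    cost T i0 i x ≤ cost T i0 i xt :=
  swap_decreases_cost_general T i0 hi0 i hnonneg hmono x hfeas j hj1 hj2 hswap xt hxt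
end

section
/- Let T ≥ 2 be an integer, i₀ > 0 a real number, and i : ℝ → ℝ a function that is nonnegative, monotonically nondecreasing, convex, and differentiable on [0,∞). If the all-zero vector is a minimizer of the cost C over the set of feasible vectors, then ∑_{t=1}^{T-1} i'(0)/(i₀ + t·i(0))² ≤ 1. -/
/-!
Perturb only the first coordinate: for `x = ε • e₁` every `D_t` grows by `i ε - i 0`, so
`ε ↦ C(ε • e₁)` is minimal at `0` on `[0, ∞)`. Its right derivative there,
`1 - ∑ t, i'(0) / (i₀ + t i(0))²`, is therefore nonnegative.
-/

open Finset

theorem IsMinOn.hasDerivWithinAt_Ici_nonneg {f : ℝ → ℝ} {a f' : ℝ} (h : IsMinOn f (Set.Ici a) a)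
    (hf : HasDerivWithinAt f f' (Set.Ici a) a) : 0 ≤ f' := by
  have hone : (1 : ℝ) ∈ posTangentConeAt (Set.Ici a) a :=
    mem_posTangentConeAt_of_segment_subset <| by
      rw [segment_eq_Icc (by linarith)]
      exact Set.Icc_subset_Ici_self
  simpa using h.localize.hasFDerivWithinAt_nonneg hf.hasFDerivWithinAt hone

theorem Dinfo_zero (i0 : ℝ) (i : ℝ → ℝ) (t : ℕ) :
    Dinfo i0 i (fun _ => 0) t = i0 + t * i 0 := by
  simp [Dinfo]

theorem Dinfo_single {i0 : ℝ} {i : ℝ → ℝ} {k t : ℕ} (hk : k ∈ Icc 1 t) (ε : ℝ) :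
    Dinfo i0 i (Pi.single k ε) t = Dinfo i0 i (fun _ => 0) t + (i ε - i 0) := by
  have hterm : ∀ s, i ((Pi.single k ε : ℕ → ℝ) s) =
      i 0 + (Pi.single k (i ε - i 0) : ℕ → ℝ) s := by
    intro s
    rcases eq_or_ne s k with rfl | hs <;> simp [*]
  simp only [Dinfo, hterm, sum_add_distrib, sum_pi_single', if_pos hk]
  ring

theorem cost_single {T : ℕ} (hT : 2 ≤ T) (i0 : ℝ) (i : ℝ → ℝ) (ε : ℝ) :
    cost T i0 i (Pi.single 1 ε) =
      (∑ t ∈ Icc 1 (T - 1), 1 / (i0 + t * i 0 + (i ε - i 0))) + ε := by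
  have h1 : 1 ∈ Icc 1 (T - 1) := mem_Icc.2 ⟨le_rfl, by omega⟩
  rw [cost, sum_pi_single', if_pos h1]
  congr 1
  refine sum_congr rfl fun t ht => ?_
  rw [Dinfo_single (mem_Icc.2 ⟨le_rfl, (mem_Icc.1 ht).1⟩), Dinfo_zero]

theorem hasDerivWithinAt_cost_single {T : ℕ} (hT : 2 ≤ T) {i0 : ℝ} {i : ℝ → ℝ} {i' : ℝ}
    {s : Set ℝ} (hi : HasDerivWithinAt i i' s 0) (hD : ∀ t : ℕ, i0 + t * i 0 ≠ 0) :
    HasDerivWithinAt (fun ε => cost T i0 i (Pi.single 1 ε))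
      (1 - ∑ t ∈ Icc 1 (T - 1), i' / (i0 + t * i 0) ^ 2) s 0 := by
  have hsum : HasDerivWithinAt (fun ε => ∑ t ∈ Icc 1 (T - 1), 1 / (i0 + t * i 0 + (i ε - i 0)))
      (∑ t ∈ Icc 1 (T - 1), -i' / (i0 + t * i 0) ^ 2) s 0 :=
    HasDerivWithinAt.fun_sum fun t _ => by
      simpa [one_div] using
        ((hi.sub_const (i 0)).const_add (i0 + t * i 0)).fun_inv (by simpa using hD t)
  simpa only [cost_single hT, id_eq, neg_div, sum_neg_distrib, neg_add_eq_sub] using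
    hsum.fun_add (hasDerivWithinAt_id 0 s)

theorem isMinOn_cost_single {T : ℕ} {i0 : ℝ} {i : ℝ → ℝ}
    (hmin : ∀ x, Feasible T x → cost T i0 i (fun _ => 0) ≤ cost T i0 i x) :
    IsMinOn (fun ε => cost T i0 i (Pi.single 1 ε)) (Set.Ici 0) 0 := by
  intro ε hε
  show cost T i0 i (Pi.single 1 0) ≤ cost T i0 i (Pi.single 1 ε)
  rw [Pi.single_zero]
  exact hmin _ fun k _ _ => (Pi.single_nonneg.2 hε : (0 : ℕ → ℝ) ≤ Pi.single 1 ε) k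

theorem lazy_minimizer_necessary_condition_general (T : ℕ) (hT : 2 ≤ T) (i0 : ℝ) (hi0 : 0 < i0)
    (i : ℝ → ℝ)
    (hnonneg : ∀ y, 0 ≤ y → 0 ≤ i y)
    (hdiff : DifferentiableOn ℝ i (Set.Ici 0))
    (hmin : ∀ x, Feasible T x → cost T i0 i (fun _ => 0) ≤ cost T i0 i x) :
    ∑ t ∈ Finset.Icc 1 (T - 1),
      derivWithin i (Set.Ici 0) 0 / (i0 + (t : ℝ) * i 0) ^ 2 ≤ 1 := by
  have hD : ∀ t : ℕ, i0 + t * i 0 ≠ 0 := fun t => by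
    have := hnonneg 0 le_rfl
    positivity
  have hi := (hdiff 0 Set.self_mem_Ici).hasDerivWithinAt
  have h := (isMinOn_cost_single hmin).hasDerivWithinAt_Ici_nonneg
    (hasDerivWithinAt_cost_single hT hi hD)
  linarith

theorem lazy_minimizer_necessary_condition (T : ℕ) (hT : 2 ≤ T) (i0 : ℝ) (hi0 : 0 < i0)
    (i : ℝ → ℝ)
    (hnonneg : ∀ y, 0 ≤ y → 0 ≤ i y)
    (hmono : ∀ a b, 0 ≤ a → a ≤ b → i a ≤ i b)
    (hconv : ConvexOn ℝ (Set.Ici 0) i)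
    (hdiff : DifferentiableOn ℝ i (Set.Ici 0))
    (hmin : ∀ x, Feasible T x → cost T i0 i (fun _ => 0) ≤ cost T i0 i x) :
    ∑ t ∈ Finset.Icc 1 (T - 1),
      derivWithin i (Set.Ici 0) 0 / (i0 + (t : ℝ) * i 0) ^ 2 ≤ 1 :=
  lazy_minimizer_necessary_condition_general T hT i0 hi0 i hnonneg hdiff hmin
end
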